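/- A phase-flip on qubit 4 of the encoded state produces error syndrome 0010 and leaves the data unchanged: for every c = (c(0), c(1)) ∈ ℂ² there is a nonzero complex scalar α independent of c such that T(S₄(f(c))) = α · |0010⟩ ⊗ (c(0)|0⟩ + c(1)|1⟩). -/

import Mathlib

open scoped BigOperators

noncomputable section

/-- The 5-qubit state space `V₅ = (Fin 5 → Fin 2) → ℂ ≅ ℂ^32` with the standard
Hermitian inner product. -/
abbrev V5 : Type := EuclideanSpace ℂ (Fin 5 → Fin 2)

/-- The phase exponent `γ(x,y) = x(y₀+y₁+y₂) + y₀y₁ + y₀y₃ + y₁y₄ + y₂y₃ + y₂y₄ + y₃y₄`,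
read modulo 2 via `(-1)^·`. -/
def gam (x : Fin 2) (y : Fin 5 → Fin 2) : ℕ :=
  x.val * ((y 0).val + (y 1).val + (y 2).val)
    + (y 0).val * (y 1).val + (y 0).val * (y 3).val + (y 1).val * (y 4).val
    + (y 2).val * (y 3).val + (y 2).val * (y 4).val + (y 3).val * (y 4).val

/-- The graph-code encoding `f : ℂ² → V₅`, `f(c)(y) = Σ_x (−1)^{γ(x,y)} c(x)`
(normalization factors omitted). -/
def enc (c : Fin 2 → ℂ) : V5 := WithLp.toLp 2 fun y => ∑ x : Fin 2, (-1 : ℂ) ^ gam x y * c x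

/-- The decoding phase exponent `θ`, with `z = (l₀, l₁, l₃, l₄, x̂)`. -/
def theta (y z : Fin 5 → Fin 2) : ℕ :=
  (z 4).val * ((y 0).val + (y 1).val + (y 2).val)
    + (y 0).val * (y 1).val + (y 0).val * (y 3).val + (y 1).val * (y 4).val
    + (y 2).val * (y 3).val + (y 2).val * (y 4).val + (y 3).val * (y 4).val
    + (y 0).val * (z 0).val + (y 1).val * (z 1).val + (y 3).val * (z 2).val
    + (y 4).val * (z 3).val

/-- The graph decoding operator `T : V₅ → V₅`,
`T|y⟩ = Σ_{l₀l₁l₃l₄, x̂} (−1)^θ |l₀l₁l₃l₄x̂⟩`. -/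
def dec (ψ : V5) : V5 := WithLp.toLp 2 fun z => ∑ y : Fin 5 → Fin 2, (-1 : ℂ) ^ theta y z * ψ y

/-- The product state `|s₀s₁s₂s₃⟩ ⊗ (a|0⟩ + b|1⟩)` in `V₅`: four syndrome qubits
followed by one data qubit. -/
def synData (s : Fin 4 → Fin 2) (a b : ℂ) : V5 :=
  WithLp.toLp 2 fun (y : Fin 5 → Fin 2) => (if y 0 = s 0 ∧ y 1 = s 1 ∧ y 2 = s 2 ∧ y 3 = s 3 then (1 : ℂ) else 0)
    * (if y 4 = 0 then a else b)

/-- Bit-flip (Pauli `σ_X`) on qubit `i` (0-indexed: qubit `j` of the paper is `i = j - 1`). -/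
def bitFlip (i : Fin 5) (ψ : V5) : V5 := WithLp.toLp 2 fun y => ψ (Function.update y i (1 - y i))

/-- Phase-flip (Pauli `σ_Z`) on qubit `i` (0-indexed). -/
def phaseFlip (i : Fin 5) (ψ : V5) : V5 := WithLp.toLp 2 fun y => (-1 : ℂ) ^ (y i).val * ψ y

/-!
The decoder's phase `θ(y, z)` contains the same graph quadratic form as the encoder's `γ(x, y)`,
so in `T (S₄ f(c))` the quadratic parts cancel modulo 2 and the amplitude at `z` is
`Σ_x c(x) Σ_y (-1)^⟨y, w⟩` for a vector `w` depending linearly on `x` and `z`. Each inner sum is a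
character sum over `(ℤ/2)⁵`: it equals `32` when `w` vanishes modulo 2 and `0` otherwise, and `w`
vanishes exactly at `z = (0, 0, 1, 0, x)`.
-/

lemma one_add_neg_one_pow {R : Type*} [Ring R] (n : ℕ) :
    1 + (-1 : R) ^ n = if Even n then 2 else 0 := by
  split_ifs with hn
  · rw [hn.neg_one_pow, one_add_one_eq_two]
  · rw [(Nat.not_even_iff_odd.mp hn).neg_one_pow, add_neg_cancel]

lemma sum_neg_one_pow_sum_val_mul {ι R : Type*} [Fintype ι] [DecidableEq ι] [CommRing R]
    (w : ι → ℕ) :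
    ∑ y : ι → Fin 2, (-1 : R) ^ (∑ i, (y i).val * w i) =
      if ∀ i, Even (w i) then 2 ^ Fintype.card ι else 0 := by
  calc ∑ y : ι → Fin 2, (-1 : R) ^ (∑ i, (y i).val * w i)
      = ∏ i, ∑ b : Fin 2, (-1 : R) ^ (b.val * w i) := by
        simp_rw [Fintype.prod_sum, Finset.prod_pow_eq_pow_sum]
    _ = ∏ i, (if Even (w i) then 2 else 0 : R) := by
        simp [Fin.sum_univ_two, one_add_neg_one_pow]
    _ = _ := by rw [Fintype.prod_ite_zero, Finset.prod_const, Finset.card_univ]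

lemma Fin.even_val_iff (a : Fin 2) : Even a.val ↔ a = 0 := by
  revert a; decide

lemma Fin.even_val_add_one_iff (a : Fin 2) : Even (a.val + 1) ↔ a = 1 := by
  revert a; decide

lemma Fin.even_val_add_val_iff (a b : Fin 2) : Even (a.val + b.val) ↔ a = b := by
  revert a b; decide

/-- The linear part of `θ(y, z) + y₃ + γ(x, y)` modulo 2, as coefficients of `y₀, …, y₄`. -/
def syndromeWeight (x : Fin 2) (z : Fin 5 → Fin 2) : Fin 5 → ℕ :=
  ![(z 0).val + ((z 4).val + x.val), (z 1).val + ((z 4).val + x.val), (z 4).val + x.val,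
    (z 2).val + 1, (z 3).val]

lemma neg_one_pow_theta_add_val_three_add_gam (x : Fin 2) (y z : Fin 5 → Fin 2) :
    (-1 : ℂ) ^ (theta y z + (y 3).val + gam x y) =
      (-1) ^ (∑ i, (y i).val * syndromeWeight x z i) := by
  have hsplit : theta y z + (y 3).val + gam x y =
      2 * ((y 0).val * (y 1).val + (y 0).val * (y 3).val + (y 1).val * (y 4).val
        + (y 2).val * (y 3).val + (y 2).val * (y 4).val + (y 3).val * (y 4).val)
      + ∑ i, (y i).val * syndromeWeight x z i := by
    simp only [theta, gam, syndromeWeight, Fin.sum_univ_five, Matrix.cons_val]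
    ring
  rw [hsplit, pow_add, pow_mul, neg_one_sq, one_pow, one_mul]

lemma forall_even_syndromeWeight_iff (x : Fin 2) (z : Fin 5 → Fin 2) :
    (∀ i, Even (syndromeWeight x z i)) ↔
      z 0 = 0 ∧ z 1 = 0 ∧ z 2 = 1 ∧ z 3 = 0 ∧ z 4 = x := by
  simp only [syndromeWeight, Fin.forall_fin_succ, Matrix.cons_val_zero, Matrix.cons_val_succ,
    Matrix.cons_val_fin_one, forall_const, Nat.even_add (m := (z 0).val),
    Nat.even_add (m := (z 1).val), Fin.even_val_iff, Fin.even_val_add_one_iff,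
    Fin.even_val_add_val_iff]
  tauto

lemma dec_phaseFlip_three_enc_apply (c : Fin 2 → ℂ) (z : Fin 5 → Fin 2) :
    dec (phaseFlip 3 (enc c)) z =
      ∑ x, c x * if z 0 = 0 ∧ z 1 = 0 ∧ z 2 = 1 ∧ z 3 = 0 ∧ z 4 = x then 32 else 0 := by
  calc dec (phaseFlip 3 (enc c)) z
      = ∑ x, c x * ∑ y, (-1 : ℂ) ^ (theta y z + (y 3).val + gam x y) := by
        simp only [dec, phaseFlip, enc, WithLp.ofLp_toLp, Finset.mul_sum, pow_add]
        rw [Finset.sum_comm]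
        refine Finset.sum_congr rfl fun x _ => Finset.sum_congr rfl fun y _ => ?_
        ring
    _ = _ := by
        simp_rw [neg_one_pow_theta_add_val_three_add_gam, sum_neg_one_pow_sum_val_mul,
          forall_even_syndromeWeight_iff]
        norm_num

lemma synData_apply_eq_sum (s : Fin 4 → Fin 2) (c : Fin 2 → ℂ) (z : Fin 5 → Fin 2) :
    synData s (c 0) (c 1) z =
      ∑ x, c x * if z 0 = s 0 ∧ z 1 = s 1 ∧ z 2 = s 2 ∧ z 3 = s 3 ∧ z 4 = x then 1 else 0 := by
  obtain h | h := Fin.exists_fin_two.mp ⟨z 4, rfl⟩ <;> simp [synData, Fin.sum_univ_two, h]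

/-- A phase-flip on qubit 4 produces syndrome `0010` and leaves the data unchanged: `T(S₄ f(c)) = α |0010⟩ ⊗ (c(0)|0⟩ + c(1)|1⟩)` with `α ≠ 0` independent of `c`. -/
theorem phase_flip_qubit4_syndrome :
    ∃ α : ℂ, α ≠ 0 ∧ ∀ c : Fin 2 → ℂ,
      dec (phaseFlip 3 (enc c)) = α • synData ![0, 0, 1, 0] (c 0) (c 1) := by
  refine ⟨32, by norm_num, fun c => ?_⟩
  ext z
  rw [dec_phaseFlip_three_enc_apply, PiLp.smul_apply, synData_apply_eq_sum, Finset.smul_sum]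
  refine Finset.sum_congr rfl fun x _ => ?_
  split_ifs <;> simp_all [mul_comm]
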